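/- arXiv:2605.02595 — 2 statements merged into one kernel-verified Lean document; each statement's English description precedes it below -/
import Mathlib

section
/- Let P, Q : ℝ³ → ℝ be smooth functions of the variables (x, y, t) satisfying the system P_{xt} = P_x·P_{xy} + Q_x·P_{xy} + 2P_x·Q_{xy} + P_{xx}·P_y + P_{xx}·Q_y and Q_{xt} = Q_x·Q_{xy} + P_x·Q_{xy} + 2Q_x·P_{xy} + Q_{xx}·Q_y + Q_{xx}·P_y. Then the conservation law ∂_t (3P_x³·Q_x + 9P_x²·Q_x² + 3P_x·Q_x³) = ∂_x ((P_y + Q_y)·(3P_x³·Q_x + 9P_x²·Q_x² + 3P_x·Q_x³)) + ∂_y (3P_x·Q_x⁴ + 18P_x²·Q_x³ + 18P_x³·Q_x² + 3P_x⁴·Q_x) holds identically. -/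
open Real Finset

/-- Partial derivative in the first variable `x`. -/
noncomputable def dX (P : ℝ → ℝ → ℝ → ℝ) (x y t : ℝ) : ℝ :=
  deriv (fun s => P s y t) x

/-- Partial derivative in the second variable `y`. -/
noncomputable def dY (P : ℝ → ℝ → ℝ → ℝ) (x y t : ℝ) : ℝ :=
  deriv (fun s => P x s t) y

section helpers
variable {f : ℝ × ℝ × ℝ → ℝ}

lemma slice1 (hf : Differentiable ℝ f) (x y t : ℝ) :
    HasDerivAt (fun s => f (s, y, t)) (fderiv ℝ f (x, y, t) (1, 0, 0)) x := by
  have h : HasDerivAt (fun s : ℝ => ((s, y, t) : ℝ × ℝ × ℝ)) ((1 : ℝ), (0 : ℝ), (0 : ℝ)) x :=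
    (hasDerivAt_id x).prodMk ((hasDerivAt_const x y).prodMk (hasDerivAt_const x t))
  exact (hf (x, y, t)).hasFDerivAt.comp_hasDerivAt x h

lemma slice2 (hf : Differentiable ℝ f) (x y t : ℝ) :
    HasDerivAt (fun s => f (x, s, t)) (fderiv ℝ f (x, y, t) (0, 1, 0)) y := by
  have h : HasDerivAt (fun s : ℝ => ((x, s, t) : ℝ × ℝ × ℝ)) ((0 : ℝ), (1 : ℝ), (0 : ℝ)) y :=
    (hasDerivAt_const y x).prodMk ((hasDerivAt_id y).prodMk (hasDerivAt_const y t))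
  exact (hf (x, y, t)).hasFDerivAt.comp_hasDerivAt y h

lemma slice3 (hf : Differentiable ℝ f) (x y t : ℝ) :
    HasDerivAt (fun s => f (x, y, s)) (fderiv ℝ f (x, y, t) (0, 0, 1)) t := by
  have h : HasDerivAt (fun s : ℝ => ((x, y, s) : ℝ × ℝ × ℝ)) ((0 : ℝ), (0 : ℝ), (1 : ℝ)) t :=
    (hasDerivAt_const t x).prodMk ((hasDerivAt_const t y).prodMk (hasDerivAt_id t))
  exact (hf (x, y, t)).hasFDerivAt.comp_hasDerivAt t h

lemma smooth_fderiv_apply (hf : ContDiff ℝ (⊤ : ℕ∞) f) (v : ℝ × ℝ × ℝ) :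
    ContDiff ℝ (⊤ : ℕ∞) (fun p => fderiv ℝ f p v) :=
  (ContinuousLinearMap.apply ℝ ℝ v).contDiff.comp (hf.fderiv_right (by simp))

lemma fderiv_fderiv_apply (hf : ContDiff ℝ (⊤ : ℕ∞) f) (p v w : ℝ × ℝ × ℝ) :
    fderiv ℝ (fun q => fderiv ℝ f q w) p v = fderiv ℝ (fderiv ℝ f) p v w := by
  have h1 : DifferentiableAt ℝ (fderiv ℝ f) p :=
    ((hf.fderiv_right (m := 1) (WithTop.coe_le_coe.mpr le_top)).differentiable one_ne_zero) p
  have h2 : HasFDerivAt (fun q => fderiv ℝ f q w)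
      ((ContinuousLinearMap.apply ℝ ℝ w).comp (fderiv ℝ (fderiv ℝ f) p)) p :=
    (ContinuousLinearMap.apply ℝ ℝ w).hasFDerivAt.comp p h1.hasFDerivAt
  rw [h2.fderiv]; rfl

lemma snd_symm (hf : ContDiff ℝ (⊤ : ℕ∞) f) (p v w : ℝ × ℝ × ℝ) :
    fderiv ℝ (fderiv ℝ f) p v w = fderiv ℝ (fderiv ℝ f) p w v := by
  have h1 : DifferentiableAt ℝ (fderiv ℝ f) p :=
    ((hf.fderiv_right (m := 1) (WithTop.coe_le_coe.mpr le_top)).differentiable one_ne_zero) p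
  exact second_derivative_symmetric (fun q => ((hf.differentiable (by simp)) q).hasFDerivAt)
    h1.hasFDerivAt v w

end helpers

section curried
variable (F : ℝ → ℝ → ℝ → ℝ)

/-- The uncurried version of a curried function. -/
noncomputable def unc : ℝ × ℝ × ℝ → ℝ := fun p => F p.1 p.2.1 p.2.2

variable {F}

lemma dX_eq (hF : ContDiff ℝ (⊤ : ℕ∞) (unc F)) (x y t : ℝ) :
    dX F x y t = fderiv ℝ (unc F) (x, y, t) (1, 0, 0) :=
  (slice1 (hF.differentiable (by simp)) x y t).deriv

lemma dY_eq (hF : ContDiff ℝ (⊤ : ℕ∞) (unc F)) (x y t : ℝ) :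
    dY F x y t = fderiv ℝ (unc F) (x, y, t) (0, 1, 0) :=
  (slice2 (hF.differentiable (by simp)) x y t).deriv

lemma hasDerivAt_dX_x (hF : ContDiff ℝ (⊤ : ℕ∞) (unc F)) (x y t : ℝ) :
    HasDerivAt (fun s => dX F s y t)
      (fderiv ℝ (fderiv ℝ (unc F)) (x, y, t) (1, 0, 0) (1, 0, 0)) x := by
  have hfun : (fun s => dX F s y t) = (fun s => fderiv ℝ (unc F) (s, y, t) (1, 0, 0)) :=
    funext fun s => dX_eq hF s y t
  rw [hfun, ← fderiv_fderiv_apply hF]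
  exact slice1 ((smooth_fderiv_apply hF _).differentiable (by simp)) x y t

lemma hasDerivAt_dX_y (hF : ContDiff ℝ (⊤ : ℕ∞) (unc F)) (x y t : ℝ) :
    HasDerivAt (fun s => dX F x s t)
      (fderiv ℝ (fderiv ℝ (unc F)) (x, y, t) (0, 1, 0) (1, 0, 0)) y := by
  have hfun : (fun s => dX F x s t) = (fun s => fderiv ℝ (unc F) (x, s, t) (1, 0, 0)) :=
    funext fun s => dX_eq hF x s t
  rw [hfun, ← fderiv_fderiv_apply hF]
  exact slice2 ((smooth_fderiv_apply hF _).differentiable (by simp)) x y t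

lemma hasDerivAt_dX_t (hF : ContDiff ℝ (⊤ : ℕ∞) (unc F)) (x y t : ℝ) :
    HasDerivAt (fun s => dX F x y s)
      (fderiv ℝ (fderiv ℝ (unc F)) (x, y, t) (0, 0, 1) (1, 0, 0)) t := by
  have hfun : (fun s => dX F x y s) = (fun s => fderiv ℝ (unc F) (x, y, s) (1, 0, 0)) :=
    funext fun s => dX_eq hF x y s
  rw [hfun, ← fderiv_fderiv_apply hF]
  exact slice3 ((smooth_fderiv_apply hF _).differentiable (by simp)) x y t

lemma hasDerivAt_dY_x (hF : ContDiff ℝ (⊤ : ℕ∞) (unc F)) (x y t : ℝ) :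
    HasDerivAt (fun s => dY F s y t)
      (fderiv ℝ (fderiv ℝ (unc F)) (x, y, t) (0, 1, 0) (1, 0, 0)) x := by
  have hfun : (fun s => dY F s y t) = (fun s => fderiv ℝ (unc F) (s, y, t) (0, 1, 0)) :=
    funext fun s => dY_eq hF s y t
  rw [hfun, snd_symm hF, ← fderiv_fderiv_apply hF]
  exact slice1 ((smooth_fderiv_apply hF _).differentiable (by simp)) x y t

end curried

theorem shallow_water_third_conservation_law
    (P Q : ℝ → ℝ → ℝ → ℝ)
    (hPsmooth : ContDiff ℝ (⊤ : ℕ∞) (fun p : ℝ × ℝ × ℝ => P p.1 p.2.1 p.2.2))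
    (hQsmooth : ContDiff ℝ (⊤ : ℕ∞) (fun p : ℝ × ℝ × ℝ => Q p.1 p.2.1 p.2.2))
    (hP : ∀ x y t : ℝ,
      deriv (fun s => dX P x y s) t =
        dX P x y t * deriv (fun s => dX P x s t) y
        + dX Q x y t * deriv (fun s => dX P x s t) y
        + 2 * dX P x y t * deriv (fun s => dX Q x s t) y
        + deriv (fun s => dX P s y t) x * dY P x y t
        + deriv (fun s => dX P s y t) x * dY Q x y t)
    (hQ : ∀ x y t : ℝ,
      deriv (fun s => dX Q x y s) t =
        dX Q x y t * deriv (fun s => dX Q x s t) y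
        + dX P x y t * deriv (fun s => dX Q x s t) y
        + 2 * dX Q x y t * deriv (fun s => dX P x s t) y
        + deriv (fun s => dX Q s y t) x * dY Q x y t
        + deriv (fun s => dX Q s y t) x * dY P x y t)
    (x y t : ℝ) :
    deriv (fun s => 3 * dX P x y s ^ 3 * dX Q x y s + 9 * dX P x y s ^ 2 * dX Q x y s ^ 2 + 3 * dX P x y s * dX Q x y s ^ 3) t =
      deriv (fun s => (dY P s y t + dY Q s y t) * (3 * dX P s y t ^ 3 * dX Q s y t + 9 * dX P s y t ^ 2 * dX Q s y t ^ 2 + 3 * dX P s y t * dX Q s y t ^ 3)) x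
      + deriv (fun s => 3 * dX P x s t * dX Q x s t ^ 4 + 18 * dX P x s t ^ 2 * dX Q x s t ^ 3 + 18 * dX P x s t ^ 3 * dX Q x s t ^ 2 + 3 * dX P x s t ^ 4 * dX Q x s t) y := by
  have hPs : ContDiff ℝ (⊤ : ℕ∞) (unc P) := hPsmooth
  have hQs : ContDiff ℝ (⊤ : ℕ∞) (unc Q) := hQsmooth
  -- first derivatives (values)
  set u := dX P x y t with hu
  set v := dX Q x y t with hv
  set p1 := dY P x y t with hp1
  set q1 := dY Q x y t with hq1
  -- second partial derivative values
  set ux := fderiv ℝ (fderiv ℝ (unc P)) (x, y, t) (1, 0, 0) (1, 0, 0) with hux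
  set uy := fderiv ℝ (fderiv ℝ (unc P)) (x, y, t) (0, 1, 0) (1, 0, 0) with huy
  set ut := fderiv ℝ (fderiv ℝ (unc P)) (x, y, t) (0, 0, 1) (1, 0, 0) with hut
  set vx := fderiv ℝ (fderiv ℝ (unc Q)) (x, y, t) (1, 0, 0) (1, 0, 0) with hvx
  set vy := fderiv ℝ (fderiv ℝ (unc Q)) (x, y, t) (0, 1, 0) (1, 0, 0) with hvy
  set vt := fderiv ℝ (fderiv ℝ (unc Q)) (x, y, t) (0, 0, 1) (1, 0, 0) with hvt
  have hUx := hasDerivAt_dX_x hPs x y t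
  have hUy := hasDerivAt_dX_y hPs x y t
  have hUt := hasDerivAt_dX_t hPs x y t
  have hVx := hasDerivAt_dX_x hQs x y t
  have hVy := hasDerivAt_dX_y hQs x y t
  have hVt := hasDerivAt_dX_t hQs x y t
  have hPyx := hasDerivAt_dY_x hPs x y t
  have hQyx := hasDerivAt_dY_x hQs x y t
  -- rewrite the PDEs in terms of these values
  have hPeq := hP x y t
  rw [hUt.deriv, hUy.deriv, hVy.deriv, hUx.deriv, ← hu, ← hv, ← hp1, ← hq1] at hPeq
  have hQeq := hQ x y t
  rw [hVt.deriv, hVy.deriv, hUy.deriv, hVx.deriv, ← hu, ← hv, ← hp1, ← hq1] at hQeq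
  -- LHS: time derivative
  have hL : HasDerivAt
      (fun s => 3 * dX P x y s ^ 3 * dX Q x y s + 9 * dX P x y s ^ 2 * dX Q x y s ^ 2
        + 3 * dX P x y s * dX Q x y s ^ 3)
      (3 * (3 * u ^ 2 * ut) * v + 3 * u ^ 3 * vt
        + (9 * (2 * u ^ 1 * ut) * v ^ 2 + 9 * u ^ 2 * (2 * v ^ 1 * vt))
        + (3 * ut * v ^ 3 + 3 * u * (3 * v ^ 2 * vt))) t := by
    exact ((((hUt.pow 3).const_mul 3).mul hVt).add
      (((hUt.pow 2).const_mul 9).mul (hVt.pow 2))).add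
      ((hUt.const_mul 3).mul (hVt.pow 3))
  -- RHS1: x derivative
  have hT : HasDerivAt
      (fun s => 3 * dX P s y t ^ 3 * dX Q s y t + 9 * dX P s y t ^ 2 * dX Q s y t ^ 2
        + 3 * dX P s y t * dX Q s y t ^ 3)
      (3 * (3 * u ^ 2 * ux) * v + 3 * u ^ 3 * vx
        + (9 * (2 * u ^ 1 * ux) * v ^ 2 + 9 * u ^ 2 * (2 * v ^ 1 * vx))
        + (3 * ux * v ^ 3 + 3 * u * (3 * v ^ 2 * vx))) x := by
    exact ((((hUx.pow 3).const_mul 3).mul hVx).add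
      (((hUx.pow 2).const_mul 9).mul (hVx.pow 2))).add
      ((hUx.const_mul 3).mul (hVx.pow 3))
  have hR1 : HasDerivAt
      (fun s => (dY P s y t + dY Q s y t) * (3 * dX P s y t ^ 3 * dX Q s y t
        + 9 * dX P s y t ^ 2 * dX Q s y t ^ 2 + 3 * dX P s y t * dX Q s y t ^ 3))
      ((uy + vy) * (3 * u ^ 3 * v + 9 * u ^ 2 * v ^ 2 + 3 * u * v ^ 3)
        + (p1 + q1) * (3 * (3 * u ^ 2 * ux) * v + 3 * u ^ 3 * vx
          + (9 * (2 * u ^ 1 * ux) * v ^ 2 + 9 * u ^ 2 * (2 * v ^ 1 * vx))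
          + (3 * ux * v ^ 3 + 3 * u * (3 * v ^ 2 * vx)))) x :=
    (hPyx.add hQyx).mul hT
  -- RHS2: y derivative
  have hR2 : HasDerivAt
      (fun s => 3 * dX P x s t * dX Q x s t ^ 4 + 18 * dX P x s t ^ 2 * dX Q x s t ^ 3
        + 18 * dX P x s t ^ 3 * dX Q x s t ^ 2 + 3 * dX P x s t ^ 4 * dX Q x s t)
      (3 * uy * v ^ 4 + 3 * u * (4 * v ^ 3 * vy)
        + (18 * (2 * u ^ 1 * uy) * v ^ 3 + 18 * u ^ 2 * (3 * v ^ 2 * vy))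
        + (18 * (3 * u ^ 2 * uy) * v ^ 2 + 18 * u ^ 3 * (2 * v ^ 1 * vy))
        + (3 * (4 * u ^ 3 * uy) * v + 3 * u ^ 4 * vy)) y := by
    exact ((((hUy.const_mul 3).mul (hVy.pow 4)).add
      (((hUy.pow 2).const_mul 18).mul (hVy.pow 3))).add
      (((hUy.pow 3).const_mul 18).mul (hVy.pow 2))).add
      (((hUy.pow 4).const_mul 3).mul hVy)
  rw [hL.deriv, hR1.deriv, hR2.deriv, hut, hvt, hPeq, hQeq, ← hux, ← huy, ← hvx, ← hvy]
  ring
end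

section
/- Let P, Q : ℝ³ → ℝ be smooth functions of the variables (x, y, t) satisfying the system P_{xt} = P_{xy}·(e^{P_x} + e^{Q_x}) + 2·Q_{xy}·e^{Q_x} + Q_{xx}·e^{Q_x}·(P_y + Q_y) and Q_{xt} = Q_{xy}·(e^{Q_x} + e^{P_x}) + 2·P_{xy}·e^{P_x} + P_{xx}·e^{P_x}·(P_y + Q_y). Then the conservation law ∂_t (e^{2P_x} + 4·e^{P_x + Q_x} + e^{2Q_x}) = ∂_x ((2·e^{2P_x + Q_x} + 2·e^{P_x + 2Q_x})·(P_y + Q_y)) + ∂_y ((2/3)·e^{3P_x} + 6·e^{2P_x + Q_x} + 6·e^{P_x + 2Q_x} + (2/3)·e^{3Q_x}) holds identically. -/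
open Real Finset

section helpers
variable {E : Type*} [NormedAddCommGroup E] [NormedSpace ℝ E]

lemma hasDerivAt_slice1 (f : ℝ × ℝ × ℝ → E) (x y t : ℝ)
    (hf : DifferentiableAt ℝ f (x, y, t)) :
    HasDerivAt (fun s => f (s, y, t)) (fderiv ℝ f (x, y, t) (1, 0, 0)) x :=
  hf.hasFDerivAt.comp_hasDerivAt x
    (HasDerivAt.prodMk (hasDerivAt_id x) (HasDerivAt.prodMk (hasDerivAt_const x y) (hasDerivAt_const x t)))

lemma hasDerivAt_slice2 (f : ℝ × ℝ × ℝ → E) (x y t : ℝ)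
    (hf : DifferentiableAt ℝ f (x, y, t)) :
    HasDerivAt (fun s => f (x, s, t)) (fderiv ℝ f (x, y, t) (0, 1, 0)) y :=
  hf.hasFDerivAt.comp_hasDerivAt y
    (HasDerivAt.prodMk (hasDerivAt_const y x) (HasDerivAt.prodMk (hasDerivAt_id y) (hasDerivAt_const y t)))

lemma hasDerivAt_slice3 (f : ℝ × ℝ × ℝ → E) (x y t : ℝ)
    (hf : DifferentiableAt ℝ f (x, y, t)) :
    HasDerivAt (fun s => f (x, y, s)) (fderiv ℝ f (x, y, t) (0, 0, 1)) t :=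
  hf.hasFDerivAt.comp_hasDerivAt t
    (HasDerivAt.prodMk (hasDerivAt_const t x) (HasDerivAt.prodMk (hasDerivAt_const t y) (hasDerivAt_id t)))

end helpers

lemma deriv_fderiv_slice1 (f : ℝ × ℝ × ℝ → ℝ) (hf : ContDiff ℝ (⊤ : ℕ∞) f) (x y t : ℝ) (w : ℝ × ℝ × ℝ) :
    deriv (fun s => fderiv ℝ f (s, y, t) w) x = fderiv ℝ (fderiv ℝ f) (x, y, t) (1, 0, 0) w := by
  have hdf : ContDiff ℝ (⊤ : ℕ∞) (fderiv ℝ f) := hf.fderiv_right (by simp)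
  have h1 : HasDerivAt (fun s => fderiv ℝ f (s, y, t)) (fderiv ℝ (fderiv ℝ f) (x, y, t) (1, 0, 0)) x :=
    hasDerivAt_slice1 _ x y t (hdf.differentiable (by simp)).differentiableAt
  have h2 := h1.clm_apply (hasDerivAt_const x w)
  simpa using h2.deriv

lemma deriv_fderiv_slice2 (f : ℝ × ℝ × ℝ → ℝ) (hf : ContDiff ℝ (⊤ : ℕ∞) f) (x y t : ℝ) (w : ℝ × ℝ × ℝ) :
    deriv (fun s => fderiv ℝ f (x, s, t) w) y = fderiv ℝ (fderiv ℝ f) (x, y, t) (0, 1, 0) w := by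
  have hdf : ContDiff ℝ (⊤ : ℕ∞) (fderiv ℝ f) := hf.fderiv_right (by simp)
  have h1 : HasDerivAt (fun s => fderiv ℝ f (x, s, t)) (fderiv ℝ (fderiv ℝ f) (x, y, t) (0, 1, 0)) y :=
    hasDerivAt_slice2 _ x y t (hdf.differentiable (by simp)).differentiableAt
  have h2 := h1.clm_apply (hasDerivAt_const y w)
  simpa using h2.deriv

lemma fderiv2_symm (f : ℝ × ℝ × ℝ → ℝ) (hf : ContDiff ℝ (⊤ : ℕ∞) f) (p a b : ℝ × ℝ × ℝ) :
    fderiv ℝ (fderiv ℝ f) p a b = fderiv ℝ (fderiv ℝ f) p b a := by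
  have hdf : Differentiable ℝ (fderiv ℝ f) := (hf.fderiv_right (m := (⊤ : ℕ∞)) (by simp)).differentiable (by simp)
  exact second_derivative_symmetric (fun q => (hf.differentiable (by simp) q).hasFDerivAt)
    (hdf p).hasFDerivAt a b

section curried
variable (R : ℝ → ℝ → ℝ → ℝ)

lemma dX_eq_fderiv (hR : ContDiff ℝ (⊤ : ℕ∞) (fun p : ℝ × ℝ × ℝ => R p.1 p.2.1 p.2.2))
    (a b c : ℝ) :
    dX R a b c = fderiv ℝ (fun p : ℝ × ℝ × ℝ => R p.1 p.2.1 p.2.2) (a, b, c) (1, 0, 0) := by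
  unfold dX
  rw [show (fun s => R s b c) = (fun s => (fun p : ℝ × ℝ × ℝ => R p.1 p.2.1 p.2.2) (s, b, c)) from rfl]
  exact (hasDerivAt_slice1 (fun p : ℝ × ℝ × ℝ => R p.1 p.2.1 p.2.2) a b c
    ((hR.differentiable (by simp)) _)).deriv

lemma dY_eq_fderiv (hR : ContDiff ℝ (⊤ : ℕ∞) (fun p : ℝ × ℝ × ℝ => R p.1 p.2.1 p.2.2))
    (a b c : ℝ) :
    dY R a b c = fderiv ℝ (fun p : ℝ × ℝ × ℝ => R p.1 p.2.1 p.2.2) (a, b, c) (0, 1, 0) := by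
  unfold dY
  rw [show (fun s => R a s c) = (fun s => (fun p : ℝ × ℝ × ℝ => R p.1 p.2.1 p.2.2) (a, s, c)) from rfl]
  exact (hasDerivAt_slice2 (fun p : ℝ × ℝ × ℝ => R p.1 p.2.1 p.2.2) a b c
    ((hR.differentiable (by simp)) _)).deriv

variable (hR : ContDiff ℝ (⊤ : ℕ∞) (fun p : ℝ × ℝ × ℝ => R p.1 p.2.1 p.2.2))
include hR

lemma contDiff_dX_fun :
    ContDiff ℝ (⊤ : ℕ∞) (fun p : ℝ × ℝ × ℝ =>
      fderiv ℝ (fun q : ℝ × ℝ × ℝ => R q.1 q.2.1 q.2.2) p (1, 0, 0)) :=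
  (hR.fderiv_right (by simp)).clm_apply contDiff_const

lemma dX_diff_t (x y t : ℝ) : DifferentiableAt ℝ (fun s => dX R x y s) t := by
  have heq : (fun s : ℝ => dX R x y s) = fun s : ℝ =>
      fderiv ℝ (fun q : ℝ × ℝ × ℝ => R q.1 q.2.1 q.2.2) (x, y, s) (1, 0, 0) :=
    funext fun s => dX_eq_fderiv R hR x y s
  rw [heq]
  exact (hasDerivAt_slice3 _ x y t
    (((contDiff_dX_fun R hR).differentiable (by simp)).differentiableAt)).differentiableAt

lemma dX_diff_x (x y t : ℝ) : DifferentiableAt ℝ (fun s => dX R s y t) x := by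
  have heq : (fun s : ℝ => dX R s y t) = fun s : ℝ =>
      fderiv ℝ (fun q : ℝ × ℝ × ℝ => R q.1 q.2.1 q.2.2) (s, y, t) (1, 0, 0) :=
    funext fun s => dX_eq_fderiv R hR s y t
  rw [heq]
  exact (hasDerivAt_slice1 _ x y t
    (((contDiff_dX_fun R hR).differentiable (by simp)).differentiableAt)).differentiableAt

lemma dX_diff_y (x y t : ℝ) : DifferentiableAt ℝ (fun s => dX R x s t) y := by
  have heq : (fun s : ℝ => dX R x s t) = fun s : ℝ =>
      fderiv ℝ (fun q : ℝ × ℝ × ℝ => R q.1 q.2.1 q.2.2) (x, s, t) (1, 0, 0) :=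
    funext fun s => dX_eq_fderiv R hR x s t
  rw [heq]
  exact (hasDerivAt_slice2 _ x y t
    (((contDiff_dX_fun R hR).differentiable (by simp)).differentiableAt)).differentiableAt

lemma dY_diff_x (x y t : ℝ) : DifferentiableAt ℝ (fun s => dY R s y t) x := by
  have heq : (fun s : ℝ => dY R s y t) = fun s : ℝ =>
      fderiv ℝ (fun q : ℝ × ℝ × ℝ => R q.1 q.2.1 q.2.2) (s, y, t) (0, 1, 0) :=
    funext fun s => dY_eq_fderiv R hR s y t
  rw [heq]
  exact (hasDerivAt_slice1 _ x y t
    ((((hR.fderiv_right (m := (⊤ : ℕ∞)) (by simp)).clm_apply contDiff_const).differentiable (by simp)).differentiableAt)).differentiableAt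

lemma clairaut (x y t : ℝ) :
    deriv (fun s => dY R s y t) x = deriv (fun s => dX R x s t) y := by
  have h1 : (fun s : ℝ => dY R s y t) = fun s : ℝ =>
      fderiv ℝ (fun q : ℝ × ℝ × ℝ => R q.1 q.2.1 q.2.2) (s, y, t) (0, 1, 0) :=
    funext fun s => dY_eq_fderiv R hR s y t
  have h2 : (fun s : ℝ => dX R x s t) = fun s : ℝ =>
      fderiv ℝ (fun q : ℝ × ℝ × ℝ => R q.1 q.2.1 q.2.2) (x, s, t) (1, 0, 0) :=
    funext fun s => dX_eq_fderiv R hR x s t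
  rw [h1, h2, deriv_fderiv_slice1 _ hR, deriv_fderiv_slice2 _ hR]
  exact fderiv2_symm _ hR _ _ _

end curried

theorem toda_second_conservation_law
    (P Q : ℝ → ℝ → ℝ → ℝ)
    (hPsmooth : ContDiff ℝ (⊤ : ℕ∞) (fun p : ℝ × ℝ × ℝ => P p.1 p.2.1 p.2.2))
    (hQsmooth : ContDiff ℝ (⊤ : ℕ∞) (fun p : ℝ × ℝ × ℝ => Q p.1 p.2.1 p.2.2))
    (hP : ∀ x y t : ℝ,
      deriv (fun s => dX P x y s) t =
        deriv (fun s => dX P x s t) y * (Real.exp (dX P x y t) + Real.exp (dX Q x y t))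
        + 2 * deriv (fun s => dX Q x s t) y * Real.exp (dX Q x y t)
        + deriv (fun s => dX Q s y t) x * Real.exp (dX Q x y t) * (dY P x y t + dY Q x y t))
    (hQ : ∀ x y t : ℝ,
      deriv (fun s => dX Q x y s) t =
        deriv (fun s => dX Q x s t) y * (Real.exp (dX Q x y t) + Real.exp (dX P x y t))
        + 2 * deriv (fun s => dX P x s t) y * Real.exp (dX P x y t)
        + deriv (fun s => dX P s y t) x * Real.exp (dX P x y t) * (dY P x y t + dY Q x y t))
    (x y t : ℝ) :
    deriv (fun s => Real.exp (2 * dX P x y s) + 4 * Real.exp (dX P x y s + dX Q x y s) + Real.exp (2 * dX Q x y s)) t =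
      deriv (fun s => (2 * Real.exp (2 * dX P s y t + dX Q s y t) + 2 * Real.exp (dX P s y t + 2 * dX Q s y t)) * (dY P s y t + dY Q s y t)) x
      + deriv (fun s => (2 / 3) * Real.exp (3 * dX P x s t) + 6 * Real.exp (2 * dX P x s t + dX Q x s t) + 6 * Real.exp (dX P x s t + 2 * dX Q x s t) + (2 / 3) * Real.exp (3 * dX Q x s t)) y := by
  have hut : HasDerivAt (fun s => dX P x y s) (deriv (fun s => dX P x y s) t) t :=
    (dX_diff_t P hPsmooth x y t).hasDerivAt
  have hvt : HasDerivAt (fun s => dX Q x y s) (deriv (fun s => dX Q x y s) t) t :=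
    (dX_diff_t Q hQsmooth x y t).hasDerivAt
  have hux : HasDerivAt (fun s => dX P s y t) (deriv (fun s => dX P s y t) x) x :=
    (dX_diff_x P hPsmooth x y t).hasDerivAt
  have hvx : HasDerivAt (fun s => dX Q s y t) (deriv (fun s => dX Q s y t) x) x :=
    (dX_diff_x Q hQsmooth x y t).hasDerivAt
  have huy : HasDerivAt (fun s => dX P x s t) (deriv (fun s => dX P x s t) y) y :=
    (dX_diff_y P hPsmooth x y t).hasDerivAt
  have hvy : HasDerivAt (fun s => dX Q x s t) (deriv (fun s => dX Q x s t) y) y :=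
    (dX_diff_y Q hQsmooth x y t).hasDerivAt
  have hpyx : HasDerivAt (fun s => dY P s y t) (deriv (fun s => dY P s y t) x) x :=
    (dY_diff_x P hPsmooth x y t).hasDerivAt
  have hqyx : HasDerivAt (fun s => dY Q s y t) (deriv (fun s => dY Q s y t) x) x :=
    (dY_diff_x Q hQsmooth x y t).hasDerivAt
  have hL : HasDerivAt
      (fun s => Real.exp (2 * dX P x y s) + 4 * Real.exp (dX P x y s + dX Q x y s) + Real.exp (2 * dX Q x y s))
      (Real.exp (2 * dX P x y t) * (2 * deriv (fun s => dX P x y s) t)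
        + 4 * (Real.exp (dX P x y t + dX Q x y t) * (deriv (fun s => dX P x y s) t + deriv (fun s => dX Q x y s) t))
        + Real.exp (2 * dX Q x y t) * (2 * deriv (fun s => dX Q x y s) t)) t := by
    exact ((hut.const_mul 2).exp.add (((hut.add hvt).exp).const_mul 4)).add ((hvt.const_mul 2).exp)
  have hR1 : HasDerivAt
      (fun s => (2 * Real.exp (2 * dX P s y t + dX Q s y t) + 2 * Real.exp (dX P s y t + 2 * dX Q s y t)) * (dY P s y t + dY Q s y t))
      ((2 * (Real.exp (2 * dX P x y t + dX Q x y t) * (2 * deriv (fun s => dX P s y t) x + deriv (fun s => dX Q s y t) x))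
          + 2 * (Real.exp (dX P x y t + 2 * dX Q x y t) * (deriv (fun s => dX P s y t) x + 2 * deriv (fun s => dX Q s y t) x)))
        * (dY P x y t + dY Q x y t)
        + (2 * Real.exp (2 * dX P x y t + dX Q x y t) + 2 * Real.exp (dX P x y t + 2 * dX Q x y t))
          * (deriv (fun s => dY P s y t) x + deriv (fun s => dY Q s y t) x)) x := by
    exact ((((hux.const_mul 2).add hvx).exp.const_mul 2).add
      (((hux.add (hvx.const_mul 2)).exp).const_mul 2)).mul (hpyx.add hqyx)
  have hR2 : HasDerivAt
      (fun s => (2 / 3) * Real.exp (3 * dX P x s t) + 6 * Real.exp (2 * dX P x s t + dX Q x s t)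
        + 6 * Real.exp (dX P x s t + 2 * dX Q x s t) + (2 / 3) * Real.exp (3 * dX Q x s t))
      ((2 / 3) * (Real.exp (3 * dX P x y t) * (3 * deriv (fun s => dX P x s t) y))
        + 6 * (Real.exp (2 * dX P x y t + dX Q x y t) * (2 * deriv (fun s => dX P x s t) y + deriv (fun s => dX Q x s t) y))
        + 6 * (Real.exp (dX P x y t + 2 * dX Q x y t) * (deriv (fun s => dX P x s t) y + 2 * deriv (fun s => dX Q x s t) y))
        + (2 / 3) * (Real.exp (3 * dX Q x y t) * (3 * deriv (fun s => dX Q x s t) y))) y := by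
    exact ((((huy.const_mul 3).exp.const_mul (2/3)).add
      ((((huy.const_mul 2).add hvy).exp).const_mul 6)).add
      (((huy.add (hvy.const_mul 2)).exp).const_mul 6)).add ((hvy.const_mul 3).exp.const_mul (2/3))
  rw [hL.deriv, hR1.deriv, hR2.deriv, hP x y t, hQ x y t,
    clairaut P hPsmooth x y t, clairaut Q hQsmooth x y t]
  have E4 : ∀ a b : ℝ, Real.exp (2 * a + b) = Real.exp a * Real.exp a * Real.exp b := by
    intro a b
    rw [show 2 * a + b = a + (a + b) by ring, Real.exp_add, Real.exp_add]; ring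
  have E5 : ∀ a b : ℝ, Real.exp (a + 2 * b) = Real.exp a * (Real.exp b * Real.exp b) := by
    intro a b
    rw [show a + 2 * b = a + (b + b) by ring, Real.exp_add, Real.exp_add]
  have E3 : ∀ a : ℝ, Real.exp (3 * a) = Real.exp a * Real.exp a * Real.exp a := by
    intro a
    rw [show 3 * a = a + (a + a) by ring, Real.exp_add, Real.exp_add]; ring
  have E2 : ∀ a : ℝ, Real.exp (2 * a) = Real.exp a * Real.exp a := by
    intro a
    rw [two_mul, Real.exp_add]
  simp only [E4, E5, E3, E2, Real.exp_add]
  ring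
end
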